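/- Let d ≥ 1, let g : ℝ^d → ℝ be continuous, let h : ℝ^d → [0,∞), let ℓ ∈ ℝ and r > 0. Assume: (a) at least three distinct unbounded connected components of {x : g(x) ≥ ℓ} intersect the open ball B_r; (b) g(x) + h(x) ≥ ℓ for all x ∈ B_r; and (c) there exists R' > 0 such that {x : g(x) ≥ ℓ} ∖ B_{R'} and {x : g(x) + h(x) ≥ ℓ} ∖ B_{R'} are percolation equivalent. Then there exists R > 0 such that the origin 0 is an R-coarse trifurcation point of the set {x : g(x) + h(x) ≥ ℓ}. -/

import Mathlib

/-!
Each of the three unbounded components of `{g ≥ ℓ}` meeting `B_r` is joined through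
`B_r ⊆ {g + h ≥ ℓ}` to the component `D` of the origin in `{g + h ≥ ℓ}`. A closed, connected,
unbounded subset of a proper space keeps an unbounded component outside every ball, so with
`R = max r R'` each of the three contributes an unbounded component of `D \ B_R`. These are
distinct: two points of `{g ≥ ℓ}` outside `B_{R'}` joined in `{g + h ≥ ℓ} \ B_{R'}` are, by
percolation equivalence, already joined in `{g ≥ ℓ}`.
-/

open MeasureTheory Metric Bornology
open scoped ENNReal NNReal

noncomputable section

/-- Euclidean space `ℝ^d`. -/
abbrev Ed (d : ℕ) := EuclideanSpace ℝ (Fin d)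

/-- Translation of a continuous function on `ℝ^d` by `y`: `g ↦ g(· + y)`. -/
def translateCM {d : ℕ} (y : Ed d) (g : C(Ed d, ℝ)) : C(Ed d, ℝ) :=
  ⟨fun x => g (x + y), g.continuous.comp (continuous_add_right y)⟩

/-- `μ` is a centered Gaussian field on continuous functions `ℝ^d → ℝ` with covariance
kernel `κ`: all finite linear combinations of point evaluations are centered Gaussian,
with the variance prescribed by `κ`. -/
def IsGaussianField {d : ℕ} [MeasurableSpace C(Ed d, ℝ)]
    (μ : Measure C(Ed d, ℝ)) (κ : Ed d → ℝ) : Prop :=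
  ∀ (n : ℕ) (x : Fin n → Ed d) (t : Fin n → ℝ),
    μ.map (fun g => ∑ i, t i * g (x i)) =
      ProbabilityTheory.gaussianReal 0 (∑ i, ∑ j, t i * t j * κ (x i - x j)).toNNReal

/-- Stationarity: the law is invariant under all translations. -/
def IsStationaryField {d : ℕ} [MeasurableSpace C(Ed d, ℝ)]
    (μ : Measure C(Ed d, ℝ)) : Prop :=
  ∀ y : Ed d, μ.map (translateCM y) = μ

/-- Ergodicity: every Borel event invariant under all translations has measure 0 or 1. -/
def IsErgodicField {d : ℕ} [MeasurableSpace C(Ed d, ℝ)]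
    (μ : Measure C(Ed d, ℝ)) : Prop :=
  ∀ s : Set C(Ed d, ℝ), MeasurableSet s → (∀ y : Ed d, translateCM y ⁻¹' s = s) →
    μ s = 0 ∨ μ s = 1

/-- First partial derivative `∂ᵢ κ (x)`. -/
def pderiv1 {d : ℕ} (κ : Ed d → ℝ) (i : Fin d) (x : Ed d) : ℝ :=
  fderiv ℝ κ x (EuclideanSpace.single i 1)

/-- Second partial derivative `∂ᵢ∂ⱼ κ (x)`. -/
def pderiv2 {d : ℕ} (κ : Ed d → ℝ) (i j : Fin d) (x : Ed d) : ℝ :=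
  fderiv ℝ (fun y => fderiv ℝ κ y (EuclideanSpace.single i 1)) x (EuclideanSpace.single j 1)

/-- The `(d+1) × (d+1)` covariance matrix of `(f(0), ∇f(0))`:
`Σ₀₀ = κ(0)`, `Σ₀ᵢ = Σᵢ₀ = ∂ᵢκ(0)`, `Σᵢⱼ = -∂ᵢ∂ⱼκ(0)`. -/
def covMatrix {d : ℕ} (κ : Ed d → ℝ) : Matrix (Fin (d + 1)) (Fin (d + 1)) ℝ :=
  Matrix.of fun i j =>
    Fin.cases
      (Fin.cases (κ 0) (fun j' => pderiv1 κ j' 0) j)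
      (fun i' => Fin.cases (pderiv1 κ i' 0) (fun j' => - pderiv2 κ i' j' 0) j) i

/-- The set of unbounded connected components of `S ⊆ ℝ^d`. -/
def unbddComps {d : ℕ} (S : Set (Ed d)) : Set (Set (Ed d)) :=
  {C | (∃ x ∈ S, C = connectedComponentIn S x) ∧ ¬ IsBounded C}

/-- `S` has at most one unbounded connected component. -/
def AtMostOneUnbounded {d : ℕ} (S : Set (Ed d)) : Prop :=
  ∀ C₁ ∈ unbddComps S, ∀ C₂ ∈ unbddComps S, C₁ = C₂

/-- Number of connected components of `S`, valued in `ℕ∞`. -/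
def numComponents {d : ℕ} (S : Set (Ed d)) : ℕ∞ :=
  {C : Set (Ed d) | ∃ x ∈ S, C = connectedComponentIn S x}.encard

/-- Percolation equivalence of `A ⊆ B`: the inclusion induces a bijection between
connected components, matching bounded components with bounded components. -/
def PercEquiv {d : ℕ} (A B : Set (Ed d)) : Prop :=
  A ⊆ B ∧
  (∀ x ∈ A, ∀ y ∈ A, connectedComponentIn B x = connectedComponentIn B y →
    connectedComponentIn A x = connectedComponentIn A y) ∧
  (∀ y ∈ B, ∃ x ∈ A, connectedComponentIn B y = connectedComponentIn B x) ∧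
  (∀ x ∈ A, (IsBounded (connectedComponentIn A x) ↔ IsBounded (connectedComponentIn B x)))

/-- `x` is an `R`-coarse trifurcation point of `S`: the component of `x` in `S` is
unbounded and, after removing the ball `B_R(x)`, it contains at least three distinct
unbounded connected components. -/
def IsCoarseTrifurcation {d : ℕ} (S : Set (Ed d)) (R : ℝ) (x : Ed d) : Prop :=
  x ∈ S ∧ ¬ IsBounded (connectedComponentIn S x) ∧
    3 ≤ (unbddComps (connectedComponentIn S x \ ball x R)).encard

end

open Set Topology

theorem exists_isClopen_subset_of_connectedComponent_subset {X : Type*} [TopologicalSpace X]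
    [T2Space X] [CompactSpace X] {x : X} {U : Set X} (hU : IsOpen U)
    (hxU : connectedComponent x ⊆ U) : ∃ V : Set X, IsClopen V ∧ x ∈ V ∧ V ⊆ U := by
  let N := {s : Set X // IsClopen s ∧ x ∈ s}
  have : Nonempty N := ⟨⟨univ, isClopen_univ, mem_univ x⟩⟩
  have hdir : Directed (· ⊇ ·) fun s : N => s.val := by
    rintro ⟨s, hs, hxs⟩ ⟨t, ht, hxt⟩
    exact ⟨⟨s ∩ t, hs.inter ht, hxs, hxt⟩, inter_subset_left, inter_subset_right⟩
  have hnhds : ∀ y ∈ ⋂ s : N, s.val, U ∈ 𝓝 y := fun y hy =>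
    hU.mem_nhds (hxU ((connectedComponent_eq_iInter_isClopen x).symm ▸ hy))
  obtain ⟨⟨V, hV, hxV⟩, hVU⟩ :=
    exists_subset_nhds_of_compactSpace hdir (fun s => s.2.1.1) hnhds
  exact ⟨V, hV, hxV, hVU⟩

theorem IsClosed.connectedComponentIn {X : Type*} [TopologicalSpace X] {F : Set X}
    (hF : IsClosed F) (x : X) : IsClosed (connectedComponentIn F x) := by
  by_cases hx : x ∈ F
  · refine closure_subset_iff_isClosed.mp <|
      isPreconnected_connectedComponentIn.closure.subset_connectedComponentIn
        (subset_closure (mem_connectedComponentIn hx)) ?_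
    exact closure_minimal (connectedComponentIn_subset F x) hF
  · rw [connectedComponentIn_eq_empty hx]
    exact isClosed_empty

theorem IsPreconnected.subset_of_inter_eq {X : Type*} [TopologicalSpace X] {s u k : Set X}
    (hs : IsPreconnected s) (hu : IsOpen u) (hk : IsClosed k) (hsuk : s ∩ u = s ∩ k)
    (hsu : (s ∩ u).Nonempty) : s ⊆ k := by
  have hcover : s ⊆ u ∪ kᶜ := fun z hz => by
    by_cases hzk : z ∈ k
    · exact Or.inl (hsuk.symm ▸ ⟨hz, hzk⟩ : z ∈ s ∩ u).2
    · exact Or.inr hzk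
  have hdisj : s ∩ (u ∩ kᶜ) = ∅ := by
    refine eq_empty_of_forall_notMem fun z ⟨hz, hzu, hzk⟩ => hzk ?_
    exact (hsuk ▸ ⟨hz, hzu⟩ : z ∈ s ∩ k).2
  rcases isPreconnected_iff_subset_of_disjoint.mp hs u kᶜ hu hk.isOpen_compl hcover hdisj
    with hsu' | hsk
  · exact fun z hz => (hsuk ▸ ⟨hz, hsu' hz⟩ : z ∈ s ∩ k).2
  · obtain ⟨z, hz, hzu⟩ := hsu
    exact absurd (hsuk ▸ ⟨hz, hzu⟩ : z ∈ s ∩ k).2 (hsk hz)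

theorem exists_isOpen_isCompact_inter_of_isBounded_connectedComponentIn {X : Type*}
    [MetricSpace X] [ProperSpace X] {A : Set X} (hA : IsClosed A) {p : X} (hp : p ∈ A)
    (hbdd : IsBounded (connectedComponentIn A p)) :
    ∃ U : Set X, IsOpen U ∧ p ∈ U ∧ IsCompact (U ∩ A) := by
  obtain ⟨n, hn⟩ := hbdd.subset_ball p
  set W := A ∩ closedBall p n
  have : CompactSpace W :=
    isCompact_iff_compactSpace.mp ((isCompact_closedBall p n).inter_left hA)
  have hpW : p ∈ W := ⟨hp, ball_subset_closedBall (hn (mem_connectedComponentIn hp))⟩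
  have hcomp : connectedComponent (⟨p, hpW⟩ : W) ⊆ (↑) ⁻¹' ball p n := fun z hz =>
    hn <| connectedComponentIn_mono p inter_subset_left <|
      connectedComponentIn_eq_image hpW ▸ mem_image_of_mem _ hz
  obtain ⟨V, hV, hpV, hVball⟩ := exists_isClopen_subset_of_connectedComponent_subset
    (isOpen_ball.preimage continuous_subtype_val) hcomp
  obtain ⟨U, hU, rfl⟩ := isOpen_induced_iff.mp hV.2
  have hVeq : (↑) '' ((↑) ⁻¹' U : Set W) = W ∩ U := Subtype.image_preimage_coe W U
  have hUA : U ∩ ball p n ∩ A = W ∩ U := by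
    ext z
    constructor
    · rintro ⟨⟨hzU, hzb⟩, hzA⟩
      exact ⟨⟨hzA, ball_subset_closedBall hzb⟩, hzU⟩
    · intro hz
      have hzb : z ∈ ball p n := by
        rw [← hVeq] at hz
        obtain ⟨w, hw, rfl⟩ := hz
        exact hVball hw
      exact ⟨⟨hz.2, hzb⟩, hz.1.1⟩
  refine ⟨U ∩ ball p n, hU.inter isOpen_ball, ⟨hpV, mem_ball_self ?_⟩, ?_⟩
  · exact (nonempty_ball.mp ⟨p, hn (mem_connectedComponentIn hp)⟩)
  · rw [hUA, ← hVeq]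
    exact hV.1.isCompact.image continuous_subtype_val

/-- If every component of `C \ ball c R` were bounded, finitely many compact, relatively open
pieces of `C \ ball c R` would cover its part near the sphere; with the ball they would cut out
of `C` a nonempty, relatively clopen, bounded part. -/
theorem exists_not_isBounded_connectedComponentIn_diff_ball {X : Type*} [MetricSpace X]
    [ProperSpace X] {C : Set X} (hC : IsClosed C) (hCpc : IsPreconnected C)
    (hCunb : ¬IsBounded C) (c : X) (R : ℝ) :
    ∃ x ∈ C \ ball c R, ¬IsBounded (connectedComponentIn (C \ ball c R) x) := by
  by_contra! hbdd
  set A := C \ ball c R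
  have hA : IsClosed A := hC.sdiff isOpen_ball
  choose! U hUo hpU hUA using fun p hp =>
    exists_isOpen_isCompact_inter_of_isBounded_connectedComponentIn hA hp (hbdd p hp)
  obtain ⟨z, hz⟩ := nonempty_of_not_isBounded hCunb
  set ρ := max R (dist z c)
  obtain ⟨t, htA, htfin, hcover⟩ := ((isCompact_closedBall c ρ).inter_left hA)
    |>.elim_finite_subcover_image hUo fun q hq => mem_biUnion hq.1 (hpU q hq.1)
  set Ut := ⋃ p ∈ t, U p
  have hQ : IsCompact (Ut ∩ A ∪ closedBall c R) := by
    rw [iUnion₂_inter]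
    exact (htfin.isCompact_biUnion fun p hp => hUA p (htA hp)).union (isCompact_closedBall c R)
  have hW : IsOpen (Ut ∪ ball c R) :=
    (isOpen_biUnion fun p hp => hUo p (htA hp)).union isOpen_ball
  have hUt : ∀ y ∈ C, y ∉ ball c R → dist y c ≤ ρ → y ∈ Ut := fun y hyC hyb hyρ =>
    hcover ⟨⟨hyC, hyb⟩, hyρ⟩
  have hWQ : C ∩ (Ut ∪ ball c R) = C ∩ (Ut ∩ A ∪ closedBall c R) := by
    ext y
    by_cases hy : y ∈ ball c R
    · simp [hy, ball_subset_closedBall hy]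
    · constructor
      · rintro ⟨hyC, hyU | hyb⟩
        · exact ⟨hyC, Or.inl ⟨hyU, hyC, hy⟩⟩
        · exact absurd hyb hy
      · rintro ⟨hyC, ⟨hyU, -⟩ | hyb⟩
        · exact ⟨hyC, Or.inl hyU⟩
        · exact ⟨hyC, Or.inl (hUt y hyC hy (mem_closedBall.mp hyb |>.trans (le_max_left _ _)))⟩
  have hzW : z ∈ C ∩ (Ut ∪ ball c R) := by
    by_cases hzb : z ∈ ball c R
    · exact ⟨hz, Or.inr hzb⟩
    · exact ⟨hz, Or.inl (hUt z hz hzb (le_max_right _ _))⟩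
  exact hCunb (hQ.isBounded.subset (hCpc.subset_of_inter_eq hW hQ.isClosed hWQ ⟨z, hzW⟩))

theorem Set.three_le_encard_of_mem {α : Type*} {s : Set α} {a b c : α} (ha : a ∈ s)
    (hb : b ∈ s) (hc : c ∈ s) (hab : a ≠ b) (hac : a ≠ c) (hbc : b ≠ c) :
    3 ≤ s.encard := by
  rw [← encard_eq_three.mpr ⟨a, b, c, hab, hac, hbc, rfl⟩]
  exact encard_le_encard (by rintro _ (rfl | rfl | rfl) <;> assumption)

section Percolation

variable {d : ℕ}

theorem PercEquiv.connectedComponentIn_eq {A B S : Set (Ed d)} (h : PercEquiv A B)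
    (hSB : S ⊆ B) {x y : Ed d} (hx : x ∈ A) (hy : y ∈ A) (hyS : y ∈ S)
    (hxy : connectedComponentIn S x = connectedComponentIn S y) :
    connectedComponentIn A x = connectedComponentIn A y :=
  h.2.1 x hx y hy <| _root_.connectedComponentIn_eq <|
    connectedComponentIn_mono x hSB (hxy ▸ mem_connectedComponentIn hyS)

theorem connectedComponentIn_eq_of_percEquiv_diff_ball {F G S : Set (Ed d)} {c : Ed d}
    {R' R : ℝ} (hperc : PercEquiv (F \ ball c R') (G \ ball c R')) (hR : R' ≤ R) (hSG : S ⊆ G)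
    ⦃x y : Ed d⦄ (hx : x ∈ (F ∩ S) \ ball c R) (hy : y ∈ (F ∩ S) \ ball c R)
    (hxy : connectedComponentIn (S \ ball c R) x = connectedComponentIn (S \ ball c R) y) :
    connectedComponentIn F x = connectedComponentIn F y := by
  have hball : ball c R' ⊆ ball c R := ball_subset_ball hR
  have hx' : x ∈ F \ ball c R' := ⟨hx.1.1, fun h => hx.2 (hball h)⟩
  have hy' : y ∈ F \ ball c R' := ⟨hy.1.1, fun h => hy.2 (hball h)⟩
  have hFxy := hperc.connectedComponentIn_eq (sdiff_subset_sdiff hSG hball) hx' hy'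
    ⟨hy.1.2, hy.2⟩ hxy
  exact connectedComponentIn_eq <|
    connectedComponentIn_mono x sdiff_subset (hFxy ▸ mem_connectedComponentIn hy')

theorem exists_mem_unbddComps_diff_ball {F G C : Set (Ed d)} (hF : IsClosed F) (hFG : F ⊆ G)
    {c : Ed d} {r : ℝ} (hball : ball c r ⊆ G) (hC : C ∈ unbddComps F)
    (hCr : (C ∩ ball c r).Nonempty) (R : ℝ) :
    ∃ x ∈ (F ∩ connectedComponentIn G c) \ ball c R, C = connectedComponentIn F x ∧
      connectedComponentIn (connectedComponentIn G c \ ball c R) x ∈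
        unbddComps (connectedComponentIn G c \ ball c R) := by
  obtain ⟨⟨y, hy, rfl⟩, hCunb⟩ := hC
  have hCD : connectedComponentIn F y ⊆ connectedComponentIn G c := by
    have hc : c ∈ ball c r := mem_ball_self (nonempty_ball.mp (hCr.mono inter_subset_right))
    refine subset_union_left.trans <|
      (isPreconnected_connectedComponentIn.union' hCr (convex_ball c r).isPreconnected)
        |>.subset_connectedComponentIn (Or.inr hc) ?_
    exact union_subset ((connectedComponentIn_subset F y).trans hFG) hball
  obtain ⟨x, hx, hxunb⟩ := exists_not_isBounded_connectedComponentIn_diff_ball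
    (hF.connectedComponentIn y) isPreconnected_connectedComponentIn hCunb c R
  have hxD : x ∈ connectedComponentIn G c \ ball c R := sdiff_subset_sdiff_left hCD hx
  refine ⟨x, ⟨⟨connectedComponentIn_subset F y hx.1, hxD.1⟩, hx.2⟩,
    connectedComponentIn_eq hx.1, ⟨x, hxD, rfl⟩, fun hbdd => hxunb (hbdd.subset ?_)⟩
  exact connectedComponentIn_mono x (sdiff_subset_sdiff_left hCD)

end Percolation

open MeasureTheory Metric Bornology in
theorem local_merging_yields_trifurcation_general
    {d : ℕ} (g : Ed d → ℝ) (hg : Continuous g)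
    (h : Ed d → ℝ) (hpos : ∀ x : Ed d, 0 ≤ h x)
    (ℓ r : ℝ)
    (ha : ∃ C₁ ∈ unbddComps {x : Ed d | ℓ ≤ g x},
          ∃ C₂ ∈ unbddComps {x : Ed d | ℓ ≤ g x},
          ∃ C₃ ∈ unbddComps {x : Ed d | ℓ ≤ g x},
            C₁ ≠ C₂ ∧ C₁ ≠ C₃ ∧ C₂ ≠ C₃ ∧
            (C₁ ∩ ball (0 : Ed d) r).Nonempty ∧
            (C₂ ∩ ball (0 : Ed d) r).Nonempty ∧
            (C₃ ∩ ball (0 : Ed d) r).Nonempty)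
    (hb : ∀ x ∈ ball (0 : Ed d) r, ℓ ≤ g x + h x)
    (hc : ∃ R' : ℝ, 0 < R' ∧
      PercEquiv ({x : Ed d | ℓ ≤ g x} \ ball (0 : Ed d) R')
        ({x : Ed d | ℓ ≤ g x + h x} \ ball (0 : Ed d) R')) :
    ∃ R : ℝ, 0 < R ∧
      IsCoarseTrifurcation {x : Ed d | ℓ ≤ g x + h x} R (0 : Ed d) := by
  obtain ⟨R', -, hperc⟩ := hc
  obtain ⟨C₁, hC₁, C₂, hC₂, C₃, hC₃, h₁₂, h₁₃, h₂₃, hC₁r, hC₂r, hC₃r⟩ := ha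
  have hr : 0 < r := nonempty_ball.mp (hC₁r.mono inter_subset_right)
  have hF : IsClosed {x : Ed d | ℓ ≤ g x} := isClosed_le continuous_const hg
  have hFG : {x : Ed d | ℓ ≤ g x} ⊆ {x | ℓ ≤ g x + h x} := fun x hx =>
    hx.trans (le_add_of_nonneg_right (hpos x))
  set R := max r R'
  obtain ⟨x₁, hx₁, rfl, hK₁⟩ := exists_mem_unbddComps_diff_ball hF hFG hb hC₁ hC₁r R
  obtain ⟨x₂, hx₂, rfl, hK₂⟩ := exists_mem_unbddComps_diff_ball hF hFG hb hC₂ hC₂r R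
  obtain ⟨x₃, hx₃, rfl, hK₃⟩ := exists_mem_unbddComps_diff_ball hF hFG hb hC₃ hC₃r R
  have hmerge := connectedComponentIn_eq_of_percEquiv_diff_ball hperc (le_max_right r R')
    (connectedComponentIn_subset _ 0)
  refine ⟨R, lt_max_of_lt_left hr, hb 0 (mem_ball_self hr), fun hD => hK₁.2 (hD.subset ?_), ?_⟩
  · exact (connectedComponentIn_subset _ _).trans sdiff_subset
  · exact three_le_encard_of_mem hK₁ hK₂ hK₃ (fun hK => h₁₂ (hmerge hx₁ hx₂ hK))
      (fun hK => h₁₃ (hmerge hx₁ hx₃ hK)) (fun hK => h₂₃ (hmerge hx₂ hx₃ hK))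

open MeasureTheory Metric Bornology in
/-- if at least three distinct unbounded components of `{g ≥ ℓ}` meet
`B_r`, the shifted field `g + h` is at least `ℓ` on `B_r`, and the shift changes the
excursion set only locally, then the origin is an `R`-coarse trifurcation point of
`{g + h ≥ ℓ}` for some `R > 0`. -/
theorem local_merging_yields_trifurcation
    {d : ℕ} (hd : 1 ≤ d) (g : Ed d → ℝ) (hg : Continuous g)
    (h : Ed d → ℝ) (hpos : ∀ x : Ed d, 0 ≤ h x)
    (ℓ r : ℝ) (hr : 0 < r)
    (ha : ∃ C₁ ∈ unbddComps {x : Ed d | ℓ ≤ g x},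
          ∃ C₂ ∈ unbddComps {x : Ed d | ℓ ≤ g x},
          ∃ C₃ ∈ unbddComps {x : Ed d | ℓ ≤ g x},
            C₁ ≠ C₂ ∧ C₁ ≠ C₃ ∧ C₂ ≠ C₃ ∧
            (C₁ ∩ ball (0 : Ed d) r).Nonempty ∧
            (C₂ ∩ ball (0 : Ed d) r).Nonempty ∧
            (C₃ ∩ ball (0 : Ed d) r).Nonempty)
    (hb : ∀ x ∈ ball (0 : Ed d) r, ℓ ≤ g x + h x)
    (hc : ∃ R' : ℝ, 0 < R' ∧
      PercEquiv ({x : Ed d | ℓ ≤ g x} \ ball (0 : Ed d) R')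
        ({x : Ed d | ℓ ≤ g x + h x} \ ball (0 : Ed d) R')) :
    ∃ R : ℝ, 0 < R ∧
      IsCoarseTrifurcation {x : Ed d | ℓ ≤ g x + h x} R (0 : Ed d) :=
  local_merging_yields_trifurcation_general g hg h hpos ℓ r ha hb hc
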